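/- The degree of cos(2π/23) over ℚ equals 11: [ℚ(cos(2π/23)) : ℚ] = 11; consequently cos(2π/23) does not lie in the top field of any (2,3)-tower of subfields of ℝ. -/

import Mathlib

/-!
For `ζ = exp (2πi/n)` with `n > 2`, `ζ + ζ⁻¹ = 2 cos (2π/n)` is real while `ζ` is not, and `ζ` is a
root of `X² - (ζ + ζ⁻¹) X + 1`; hence `[ℚ(ζ) : ℚ(cos (2π/n))] = 2` and
`[ℚ(cos (2π/n)) : ℚ] = φ(n) / 2`, which is `11` for `n = 23`. Degrees multiply along a tower, so
the top field of a (2,3)-tower has degree `2^a 3^b` over `ℚ`, and the degree of each of its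
elements divides that number; `11` does not.
-/

noncomputable section

/-- A (2,3)-tower: a finite chain `K 0 ⊆ K 1 ⊆ ⋯ ⊆ K n` of subfields of `ℝ`
(viewed as intermediate fields of `ℚ ⊆ ℝ`), with `K 0` the prime subfield
(the copy of `ℚ` in `ℝ`) and each relative degree `[K (i+1) : K i]` equal to 2 or 3. -/
structure TwoThreeTower (n : ℕ) where
  K : Fin (n + 1) → IntermediateField ℚ ℝ
  bot : K 0 = ⊥
  le : ∀ i : Fin n, K i.castSucc ≤ K i.succ
  deg : ∀ i : Fin n,
    Module.finrank (K i.castSucc) (IntermediateField.extendScalars (le i)) = 2 ∨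
    Module.finrank (K i.castSucc) (IntermediateField.extendScalars (le i)) = 3

open IntermediateField Polynomial Module

namespace IntermediateField

variable {F E : Type*} [Field F] [Field E] [Algebra F E]

theorem finrank_adjoin_eq_two_of_add_inv_mem {K : IntermediateField F E} {x : E} (hx : x ≠ 0)
    (hsum : x + x⁻¹ ∈ K) (hxK : x ∉ K) : finrank K K⟮x⟯ = 2 := by
  set p : K[X] := X ^ 2 - C ⟨x + x⁻¹, hsum⟩ * X + 1
  have hp_deg : p.natDegree = 2 := by unfold p; compute_degree!
  have hp_monic : p.Monic := by unfold p; monicity!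
  have hp_root : aeval x p = 0 := by
    simp only [p, map_add, map_sub, map_mul, map_pow, aeval_X, aeval_C, map_one]
    change x ^ 2 - (x + x⁻¹) * x + 1 = 0
    field_simp
    ring
  have hint : IsIntegral K x := ⟨p, hp_monic, hp_root⟩
  rw [adjoin.finrank hint]
  refine le_antisymm ?_ ((minpoly.two_le_natDegree_iff hint).2 ?_)
  · simpa [hp_deg] using natDegree_le_natDegree (minpoly.min K x hp_monic hp_root)
  · rintro ⟨a, rfl⟩
    exact hxK a.2

theorem finrank_adjoin_add_inv_mul_two {x : E} (hx : x ≠ 0) (hxK : x ∉ F⟮x + x⁻¹⟯) :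
    finrank F F⟮x + x⁻¹⟯ * 2 = finrank F F⟮x⟯ := by
  have hle : F⟮x + x⁻¹⟯ ≤ F⟮x⟯ := adjoin_simple_le_iff.2 <|
    add_mem (mem_adjoin_simple_self F x) (inv_mem (mem_adjoin_simple_self F x))
  rw [← finrank_bot_mul_relfinrank hle, relfinrank_eq_finrank_of_le hle, extendScalars_adjoin,
    finrank_adjoin_eq_two_of_add_inv_mem hx (mem_adjoin_simple_self F _) hxK]

theorem finrank_adjoin_simple_map {L : Type*} [Field L] [Algebra F L] (f : E →ₐ[F] L) (x : E) :
    finrank F F⟮f x⟯ = finrank F F⟮x⟯ := by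
  rw [← Set.image_singleton, ← adjoin_map]
  exact ((F⟮x⟯).equivMap f).toLinearEquiv.finrank_eq.symm

theorem adjoin_simple_smul {a : F} (ha : a ≠ 0) (x : E) : F⟮a • x⟯ = F⟮x⟯ := by
  refine le_antisymm (adjoin_simple_le_iff.2 (smul_mem _ (mem_adjoin_simple_self F x)))
    (adjoin_simple_le_iff.2 ?_)
  simpa [ha] using smul_mem F⟮a • x⟯ (mem_adjoin_simple_self F (a • x)) (x := a⁻¹)

end IntermediateField

open Complex in
theorem IsPrimitiveRoot.add_inv_eq_ofReal {ζ : ℂ} {n : ℕ} (h : IsPrimitiveRoot ζ n) (hn : n ≠ 0) :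
    ζ + ζ⁻¹ = ((2 * ζ.re : ℝ) : ℂ) := by
  rw [inv_eq_conj (h.norm'_eq_one hn), add_conj]

theorem IsPrimitiveRoot.notMem_adjoin_add_inv {ζ : ℂ} {n : ℕ} (h : IsPrimitiveRoot ζ n)
    (hn : 2 < n) : ζ ∉ ℚ⟮ζ + ζ⁻¹⟯ := by
  intro hmem
  have hreal : ℚ⟮ζ + ζ⁻¹⟯ ≤ (Complex.ofRealAm.restrictScalars ℚ).fieldRange := by
    rw [adjoin_simple_le_iff, h.add_inv_eq_ofReal (by omega)]
    exact ⟨_, rfl⟩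
  obtain ⟨r, rfl⟩ := hreal hmem
  have hr : r ^ 2 = 1 := by
    have := h.norm'_eq_one (by omega)
    simp only [AlgHom.toRingHom_eq_coe, RingHom.coe_coe, AlgHom.coe_restrictScalars',
      Complex.ofRealAm_coe, Complex.norm_real, Real.norm_eq_abs] at this
    rw [← sq_abs, this, one_pow]
  have hdvd : n ∣ 2 := h.dvd_of_pow_eq_one 2 (by simp [← Complex.ofReal_pow, hr])
  exact absurd (Nat.le_of_dvd two_pos hdvd) (by omega)

theorem finrank_adjoin_cos_two_pi_div_mul_two {n : ℕ} (hn : 2 < n) :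
    finrank ℚ ℚ⟮Real.cos (2 * Real.pi / n)⟯ * 2 = n.totient := by
  set ζ := Complex.exp (2 * Real.pi * Complex.I / n) with hζ_def
  have hζ : IsPrimitiveRoot ζ n := Complex.isPrimitiveRoot_exp n (by omega)
  have hre : ζ.re = Real.cos (2 * Real.pi / n) := by
    rw [hζ_def, show 2 * Real.pi * Complex.I / n = ((2 * Real.pi / n : ℝ) : ℂ) * Complex.I by
      push_cast; ring]
    exact Complex.exp_ofReal_mul_I_re _
  have hsum : ℚ⟮ζ + ζ⁻¹⟯ = ℚ⟮(Real.cos (2 * Real.pi / n) : ℂ)⟯ := by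
    rw [hζ.add_inv_eq_ofReal (by omega), hre,
      ← adjoin_simple_smul (two_ne_zero (α := ℚ)) (Real.cos (2 * Real.pi / n) : ℂ), two_smul,
      Complex.ofReal_mul, Complex.ofReal_ofNat, two_mul]
  rw [← finrank_adjoin_simple_map (Complex.ofRealAm.restrictScalars ℚ)]
  change finrank ℚ ℚ⟮(Real.cos (2 * Real.pi / n) : ℂ)⟯ * 2 = _
  rw [← hsum,
    finrank_adjoin_add_inv_mul_two (hζ.ne_zero (by omega)) (hζ.notMem_adjoin_add_inv hn),
    adjoin.finrank (hζ.isIntegral (by omega)).tower_top, ← cyclotomic_eq_minpoly_rat hζ (by omega),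
    natDegree_cyclotomic]

namespace TwoThreeTower

theorem exists_finrank_eq_two_pow_mul_three_pow {n : ℕ} (T : TwoThreeTower n) (i : Fin (n + 1)) :
    ∃ a b : ℕ, finrank ℚ (T.K i) = 2 ^ a * 3 ^ b := by
  induction i using Fin.induction with
  | zero => exact ⟨0, 0, by simp [T.bot]⟩
  | succ i ih =>
    obtain ⟨a, b, hab⟩ := ih
    rw [← finrank_bot_mul_relfinrank (T.le i), hab, relfinrank_eq_finrank_of_le (T.le i)]
    rcases T.deg i with h | h <;> rw [h]
    · exact ⟨a + 1, b, by ring⟩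
    · exact ⟨a, b + 1, by ring⟩

theorem notMem_of_prime_dvd_finrank_adjoin {n : ℕ} (T : TwoThreeTower n) {x : ℝ} {p : ℕ}
    (hp : p.Prime) (hp2 : p ≠ 2) (hp3 : p ≠ 3) (hdvd : p ∣ finrank ℚ ℚ⟮x⟯) :
    x ∉ T.K (Fin.last n) := by
  intro hx
  obtain ⟨a, b, hab⟩ := T.exists_finrank_eq_two_pow_mul_three_pow (Fin.last n)
  have hpdvd : p ∣ 2 ^ a * 3 ^ b := by
    rw [← hab, ← finrank_bot_mul_relfinrank (adjoin_simple_le_iff.2 hx)]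
    exact hdvd.mul_right _
  rcases hp.dvd_mul.1 hpdvd with h | h
  · exact hp2 ((Nat.prime_dvd_prime_iff_eq hp Nat.prime_two).1 (hp.dvd_of_dvd_pow h))
  · exact hp3 ((Nat.prime_dvd_prime_iff_eq hp Nat.prime_three).1 (hp.dvd_of_dvd_pow h))

end TwoThreeTower

/-- `[ℚ(cos (2π/23)) : ℚ] = 11`; consequently `cos (2π/23)` does not lie in the top
field of any (2,3)-tower of subfields of `ℝ`. -/
theorem cos_two_pi_div_twentythree_degree_and_not_in_twoThreeTower
    (c : ℝ) (hc : c = Real.cos (2 * Real.pi / 23)) :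
    Module.finrank ℚ (IntermediateField.adjoin ℚ ({c} : Set ℝ)) = 11 ∧
      ¬ ∃ (n : ℕ) (T : TwoThreeTower n), c ∈ T.K (Fin.last n) := by
  have h11 : finrank ℚ ℚ⟮c⟯ = 11 := by
    have h := finrank_adjoin_cos_two_pi_div_mul_two (n := 23) (by norm_num)
    rw [Nat.totient_prime (by norm_num), Nat.cast_ofNat, ← hc] at h
    omega
  refine ⟨h11, fun ⟨n, T, hT⟩ => T.notMem_of_prime_dvd_finrank_adjoin (p := 11) (by norm_num)
    (by norm_num) (by norm_num) (by rw [h11]) hT⟩
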